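/- For h ≥ 0, let P_h(x,y) be the generating function of Motzkin path prefixes with no peaks or valleys ending at height h, with x marking H steps and y marking U steps, and let M(x,y) = P_0(x,y). Then for all h ≥ 1, P_h·(1 − x − xy(M−1)) = y·P_{h−1}, and consequently P_h = y^h M / (1 − x − xy(M−1))^h as formal power series. -/

import Mathlib

/-- Steps of bargraphs / Motzkin paths. -/
inductive Step where
  | U : Step
  | H : Step
  | D : Step
deriving DecidableEq

/-- Vertical displacement of a step. -/
def Step.val : Step → ℤ
  | .U => 1
  | .H => 0
  | .D => -1

/-- Mirror of a step (swap U and D). -/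
def Step.mirror : Step → Step
  | .U => .D
  | .H => .H
  | .D => .U

/-- Final height of a word. -/
def hgt (w : List Step) : ℤ := (w.map Step.val).sum

/-- A Motzkin path prefix: never goes below the x-axis. -/
def IsMotzkinPrefix (w : List Step) : Prop := ∀ p : List Step, p <+: w → 0 ≤ hgt p

/-- A Motzkin path: never below the x-axis, ends at height 0. -/
def IsMotzkin (w : List Step) : Prop := IsMotzkinPrefix w ∧ hgt w = 0

/-- No peak `UD` and no valley `DU`. -/
def Cornerless (w : List Step) : Prop :=
  ¬ [Step.U, Step.D] <:+: w ∧ ¬ [Step.D, Step.U] <:+: w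

/-- A bargraph: starts at the origin, ends on the x-axis, stays strictly above the
x-axis except at the endpoints, and has no factor `UD` or `DU`. -/
def IsBargraph (w : List Step) : Prop :=
  2 ≤ w.length ∧ hgt w = 0 ∧
    (∀ p : List Step, p <+: w → p ≠ [] → p ≠ w → 0 < hgt p) ∧ Cornerless w

/-- Semiperimeter: number of `U` steps plus number of `H` steps. -/
def semi (w : List Step) : ℕ := w.count Step.U + w.count Step.H

/-- Length of the initial run of `U` steps. -/
def leadU : List Step → ℕ
  | Step.U :: rest => leadU rest + 1
  | _ => 0

/-- Length of the initial run of `H` steps. -/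
def leadH : List Step → ℕ
  | Step.H :: rest => leadH rest + 1
  | _ => 0

/-- Length of the initial run of `D` steps. -/
def leadD : List Step → ℕ
  | Step.D :: rest => leadD rest + 1
  | _ => 0

/-- Length of the first maximal run of `D` steps (0 if none). -/
def firstDescLen : List Step → ℕ
  | [] => 0
  | Step.D :: rest => leadD rest + 1
  | _ :: rest => firstDescLen rest

/-- Number of occurrences of the two-letter factor `a b`. -/
def cnt2 (a b : Step) : List Step → ℕ
  | x :: y :: rest => (if x = a ∧ y = b then 1 else 0) + cnt2 a b (y :: rest)
  | _ => 0

/-- Heights of the columns (`H` steps), starting from a given height. -/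
def colHeights : ℤ → List Step → List ℤ
  | _, [] => []
  | h, Step.U :: rest => colHeights (h + 1) rest
  | h, Step.H :: rest => h :: colHeights h rest
  | h, Step.D :: rest => colHeights (h - 1) rest

/-- Width of the leftmost maximal horizontal segment (0 if none). -/
def lhsW : List Step → ℕ
  | [] => 0
  | Step.H :: rest => leadH rest + 1
  | _ :: rest => lhsW rest

/-- Delete `h` steps at the start of the leftmost horizontal segment. -/
def stripLeadH (h : ℕ) : List Step → List Step
  | [] => []
  | Step.H :: rest => List.drop h (Step.H :: rest)
  | s :: rest => s :: stripLeadH h rest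

/-- Number of initial columns of height 1: largest `j` such that the word begins `U H^j`. -/
def iuc : List Step → ℕ
  | Step.U :: rest => leadH rest
  | _ => 0

/-- Number of maximal horizontal segments. -/
def hsCount : List Step → ℕ
  | [] => 0
  | [Step.H] => 1
  | [_] => 0
  | a :: b :: rest => (if a = Step.H ∧ b ≠ Step.H then 1 else 0) + hsCount (b :: rest)

/-- Mirror image: reverse the word and swap `U` with `D`. -/
def mir (w : List Step) : List Step := (w.reverse).map Step.mirror

/-- Shape of strictly alternating bargraphs:
`U^{i₁} H D^{k₁} H U^{i₂} H D^{k₂} H ⋯ U^{iₘ} H D^{kₘ}` with all `iᵣ, kᵣ ≥ 1`. -/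
inductive SAShape : List Step → Prop where
  | base (i k : ℕ) : 1 ≤ i → 1 ≤ k →
      SAShape (List.replicate i Step.U ++ [Step.H] ++ List.replicate k Step.D)
  | cons (i k : ℕ) (w : List Step) : 1 ≤ i → 1 ≤ k → SAShape w →
      SAShape (List.replicate i Step.U ++ [Step.H] ++ List.replicate k Step.D ++ [Step.H] ++ w)

/-- A strictly alternating bargraph. -/
def IsStrictAlt (w : List Step) : Prop := IsBargraph w ∧ SAShape w

/-- A secondary structure on `{0, …, m-1}`: all consecutive edges are present, every
vertex has at most one non-consecutive neighbour, and there are no crossing edges. -/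
def IsSecondaryStructure {m : ℕ} (G : SimpleGraph (Fin m)) : Prop :=
  (∀ i j : Fin m, (i : ℕ) + 1 = (j : ℕ) → G.Adj i j) ∧
  (∀ i j k : Fin m, G.Adj i j → G.Adj i k →
      (i : ℕ) + 1 ≠ (j : ℕ) → (j : ℕ) + 1 ≠ (i : ℕ) →
      (i : ℕ) + 1 ≠ (k : ℕ) → (k : ℕ) + 1 ≠ (i : ℕ) → j = k) ∧
  ¬ ∃ i j k l : Fin m, (i : ℕ) < (j : ℕ) ∧ (j : ℕ) < (k : ℕ) ∧ (k : ℕ) < (l : ℕ) ∧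
      G.Adj i k ∧ G.Adj j l

/-- Generating function of bargraphs: `x` (variable 0) marks `H` steps,
`y` (variable 1) marks `U` steps. -/
noncomputable def BG : MvPowerSeries (Fin 2) ℚ :=
  fun d => (Nat.card {w : List Step //
    IsBargraph w ∧ w.count Step.H = d 0 ∧ w.count Step.U = d 1} : ℚ)

/-- Generating function of cornerless Motzkin paths. -/
noncomputable def MG : MvPowerSeries (Fin 2) ℚ :=
  fun d => (Nat.card {w : List Step //
    IsMotzkin w ∧ Cornerless w ∧ w.count Step.H = d 0 ∧ w.count Step.U = d 1} : ℚ)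

/-- Generating function of bargraphs avoiding the factor `DH`. -/
noncomputable def BDH : MvPowerSeries (Fin 2) ℚ :=
  fun d => (Nat.card {w : List Step //
    IsBargraph w ∧ ¬ [Step.D, Step.H] <:+: w ∧
      w.count Step.H = d 0 ∧ w.count Step.U = d 1} : ℚ)

/-- Generating function of bargraphs avoiding the factors `DH` and `HH`. -/
noncomputable def BDHHH : MvPowerSeries (Fin 2) ℚ :=
  fun d => (Nat.card {w : List Step //
    IsBargraph w ∧ ¬ [Step.D, Step.H] <:+: w ∧ ¬ [Step.H, Step.H] <:+: w ∧
      w.count Step.H = d 0 ∧ w.count Step.U = d 1} : ℚ)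

/-- Generating function of cornerless Motzkin path prefixes ending at height `h`. -/
noncomputable def Pgf (h : ℕ) : MvPowerSeries (Fin 2) ℚ :=
  fun d => (Nat.card {w : List Step //
    IsMotzkinPrefix w ∧ Cornerless w ∧ hgt w = (h : ℤ) ∧
      w.count Step.H = d 0 ∧ w.count Step.U = d 1} : ℚ)

/-- Decomposition `G = U^a G₁ H G₂ D^a` of a strictly alternating bargraph. -/
def SADecomp (t : ℕ × List Step × List Step) (G : List Step) : Prop :=
  1 ≤ t.1 ∧ IsStrictAlt t.2.1 ∧ IsStrictAlt (Step.U :: (t.2.2 ++ [Step.D])) ∧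
    G = List.replicate t.1 Step.U ++ t.2.1 ++ [Step.H] ++ t.2.2 ++
      List.replicate t.1 Step.D


/-!
Split the prefixes ending at height `h` according to whether their last step is `D`, and let
`A_h` be the series of those that do not end in `D`. For `h ≥ 1` such a prefix ends either in `H`,
after an arbitrary prefix ending at height `h`, or in `U`, after a prefix ending at height `h - 1`
that does not end in `D` (no valley `DU`): `A_h = x P_h + y A_{h-1}`. A prefix ending in `D` cuts
uniquely at its last passage from height `h` to `h + 1` into a prefix not ending in `D` and an arch
`U m D`, where `m` is a cornerless Motzkin path, nonempty since there is no peak `UD`: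
`P_h = A_h (1 + y (M - 1))`. Eliminating `A` gives the recurrence, and iterating it (the constant
coefficient of `1 - x - xy(M - 1)` is `1`) gives the closed form.
-/
open MvPowerSeries Finset.HasAntidiagonal

section GenFun

variable {α σ : Type*} (wt : α → σ →₀ ℕ)

noncomputable def wordWeight (w : List α) : σ →₀ ℕ := (w.map wt).sum

@[simp] lemma wordWeight_nil : wordWeight wt [] = 0 := rfl

@[simp] lemma wordWeight_append (u v : List α) :
    wordWeight wt (u ++ v) = wordWeight wt u + wordWeight wt v := by
  simp [wordWeight]

@[simp] lemma wordWeight_singleton (a : α) : wordWeight wt [a] = wt a := by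
  simp [wordWeight]

def weightFiber (S : Set (List α)) (d : σ →₀ ℕ) : Set (List α) := {w ∈ S | wordWeight wt w = d}

noncomputable def genFun (S : Set (List α)) : MvPowerSeries σ ℚ :=
  fun d => ((weightFiber wt S d).ncard : ℚ)

def HasFiniteFibers (S : Set (List α)) : Prop := ∀ d, (weightFiber wt S d).Finite

variable {wt}

lemma coeff_genFun (S : Set (List α)) (d : σ →₀ ℕ) :
    coeff d (genFun wt S) = (weightFiber wt S d).ncard := rfl

lemma HasFiniteFibers.mono {S T : Set (List α)} (hT : HasFiniteFibers wt T) (hST : S ⊆ T) :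
    HasFiniteFibers wt S :=
  fun d => (hT d).subset fun _ hw => ⟨hST hw.1, hw.2⟩

lemma genFun_union {S T : Set (List α)} (hST : Disjoint S T) (hS : HasFiniteFibers wt S)
    (hT : HasFiniteFibers wt T) : genFun wt (S ∪ T) = genFun wt S + genFun wt T := by
  ext d
  have hfib : weightFiber wt (S ∪ T) d = weightFiber wt S d ∪ weightFiber wt T d :=
    Set.sep_union
  rw [map_add, coeff_genFun, coeff_genFun, coeff_genFun, hfib,
    Set.ncard_union_eq (hST.mono (fun _ h => h.1) (fun _ h => h.1)) (hS d) (hT d)]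
  push_cast; rfl

lemma genFun_singleton [DecidableEq σ] (w : List α) :
    genFun wt {w} = monomial (wordWeight wt w) 1 := by
  ext d
  rw [coeff_genFun, coeff_monomial]
  split_ifs with hd
  · have : weightFiber wt {w} d = {w} := by ext; simp +contextual [weightFiber, hd]
    simp [this]
  · have : weightFiber wt {w} d = ∅ := by ext; simp +contextual [weightFiber, Ne.symm hd]
    simp [this]

lemma genFun_image2_append [DecidableEq σ] {S T : Set (List α)} (hS : HasFiniteFibers wt S)
    (hT : HasFiniteFibers wt T) (hinj : (S ×ˢ T).InjOn fun p => p.1 ++ p.2) :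
    genFun wt (Set.image2 (· ++ ·) S T) = genFun wt S * genFun wt T := by
  ext d
  rw [coeff_mul, coeff_genFun]
  let φ : (Σ p : antidiagonal d, weightFiber wt S p.1.1 × weightFiber wt T p.1.2) →
      weightFiber wt (Set.image2 (· ++ ·) S T) d := fun x =>
    ⟨x.2.1 ++ x.2.2, Set.mem_image2_of_mem x.2.1.2.1 x.2.2.2.1, by
      rw [wordWeight_append, x.2.1.2.2, x.2.2.2.2]
      exact mem_antidiagonal.mp x.1.2⟩
  have hφ : φ.Bijective := by
    constructor
    · rintro ⟨p, u, v⟩ ⟨q, u', v'⟩ h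
      obtain ⟨hu, hv⟩ : u.1 = u'.1 ∧ v.1 = v'.1 := Prod.ext_iff.mp <|
        @hinj (u.1, v.1) ⟨u.2.1, v.2.1⟩ (u'.1, v'.1) ⟨u'.2.1, v'.2.1⟩ (congrArg Subtype.val h)
      obtain rfl : p = q := Subtype.ext <|
        Prod.ext (by rw [← u.2.2, ← u'.2.2, hu]) (by rw [← v.2.2, ← v'.2.2, hv])
      exact Sigma.ext rfl (heq_of_eq (Prod.ext (Subtype.ext hu) (Subtype.ext hv)))
    · rintro ⟨_, ⟨u, hu, v, hv, rfl⟩, hd⟩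
      exact ⟨⟨⟨(wordWeight wt u, wordWeight wt v), mem_antidiagonal.mpr (by simpa using hd)⟩,
        ⟨u, hu, rfl⟩, ⟨v, hv, rfl⟩⟩, rfl⟩
  have : ∀ p : antidiagonal d, Finite (weightFiber wt S p.1.1 × weightFiber wt T p.1.2) :=
    fun p => have := (hS p.1.1).to_subtype; have := (hT p.1.2).to_subtype; inferInstance
  rw [← Nat.card_coe_set_eq, ← Nat.card_congr (Equiv.ofBijective φ hφ), Nat.card_sigma]
  rw [← Finset.sum_coe_sort (antidiagonal d), Nat.cast_sum]
  refine Finset.sum_congr rfl fun p _ => ?_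
  rw [Nat.card_prod, Nat.cast_mul]
  rfl

lemma hasFiniteFibers_singleton (w : List α) : HasFiniteFibers wt {w} :=
  fun _ => (Set.finite_singleton w).subset fun _ hw => hw.1

lemma genFun_image_cons [DecidableEq σ] (a : α) {S : Set (List α)} (hS : HasFiniteFibers wt S) :
    genFun wt ((a :: ·) '' S) = monomial (wt a) 1 * genFun wt S := by
  rw [← wordWeight_singleton wt a, ← genFun_singleton, ← genFun_image2_append
    (hasFiniteFibers_singleton _) hS, Set.image2_singleton_left]
  · rfl
  · rintro ⟨u, v⟩ ⟨rfl, -⟩ ⟨u', v'⟩ ⟨rfl, -⟩ h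
    simpa using h

lemma genFun_image_concat [DecidableEq σ] (a : α) {S : Set (List α)} (hS : HasFiniteFibers wt S) :
    genFun wt ((· ++ [a]) '' S) = genFun wt S * monomial (wt a) 1 := by
  rw [← wordWeight_singleton wt a, ← genFun_singleton, ← genFun_image2_append hS
    (hasFiniteFibers_singleton _), Set.image2_singleton_right]
  rintro ⟨u, v⟩ ⟨-, rfl⟩ ⟨u', v'⟩ ⟨-, rfl⟩ h
  simpa using h

end GenFun

lemma eq_pow_mul_mul_pow_of_succ_mul_eq {M : Type*} [CommMonoid M] {P : ℕ → M} {c i y : M}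
    (hci : c * i = 1) (hP : ∀ k, P (k + 1) * c = y * P k) (h : ℕ) :
    P h = y ^ h * P 0 * i ^ h := by
  induction h with
  | zero => simp
  | succ k ih =>
    calc P (k + 1) = P (k + 1) * c * i := by rw [mul_assoc, hci, mul_one]
      _ = y ^ (k + 1) * P 0 * i ^ (k + 1) := by rw [hP, ih, pow_succ, pow_succ]; ac_rfl

namespace Step

instance : Fintype Step where
  elems := {U, H, D}
  complete x := by cases x <;> simp

def NoCorner (a b : Step) : Prop := ¬(a = U ∧ b = D) ∧ ¬(a = D ∧ b = U)

end Step

open Step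

noncomputable def stepWeight : Step → Fin 2 →₀ ℕ
  | H => Finsupp.single 0 1
  | U => Finsupp.single 1 1
  | D => 0

lemma wordWeight_stepWeight (w : List Step) :
    wordWeight stepWeight w = Finsupp.single 0 (w.count H) + Finsupp.single 1 (w.count U) := by
  induction w with
  | nil => simp
  | cons s w ih =>
    rw [← List.singleton_append, wordWeight_append, ih]
    cases s <;> simp [stepWeight] <;> abel

lemma length_eq_count_add_count_add_count (w : List Step) :
    w.length = w.count U + w.count H + w.count D := by
  induction w with
  | nil => rfl
  | cons s w ih => cases s <;> simp [ih] <;> omega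

/-- `D` steps carry no weight, so fibres are finite only because `D` steps are at most as
many as `U` steps. -/
lemma hasFiniteFibers_of_count_D_le {S : Set (List Step)}
    (hS : ∀ w ∈ S, w.count D ≤ w.count U) : HasFiniteFibers stepWeight S := by
  intro d
  refine (List.finite_length_le Step (d 0 + 2 * d 1)).subset fun w ⟨hw, hd⟩ => ?_
  have h0 : w.count H = d 0 := by simp [← hd, wordWeight_stepWeight]
  have h1 : w.count U = d 1 := by simp [← hd, wordWeight_stepWeight]
  have hlen := length_eq_count_add_count_add_count w
  have hDU := hS w hw
  show w.length ≤ d 0 + 2 * d 1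
  omega

@[simp] lemma hgt_nil : hgt [] = 0 := rfl

@[simp] lemma hgt_append (u v : List Step) : hgt (u ++ v) = hgt u + hgt v := by
  simp [hgt]

@[simp] lemma hgt_cons (s : Step) (w : List Step) : hgt (s :: w) = s.val + hgt w := by
  simp [hgt]

lemma hgt_eq_count_sub_count (w : List Step) : hgt w = w.count U - w.count D := by
  induction w with
  | nil => rfl
  | cons s w ih => cases s <;> simp [ih, Step.val] <;> ring

lemma cornerless_iff_isChain {w : List Step} : Cornerless w ↔ w.IsChain NoCorner := by
  rw [List.isChain_iff_forall_rel_of_append_cons_cons]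
  constructor
  · rintro ⟨hUD, hDU⟩ a b l₁ l₂ rfl
    refine ⟨?_, ?_⟩ <;> rintro ⟨rfl, rfl⟩
    exacts [hUD ⟨l₁, l₂, by simp⟩, hDU ⟨l₁, l₂, by simp⟩]
  · intro h
    refine ⟨?_, ?_⟩ <;> rintro ⟨l₁, l₂, rfl⟩
    exacts [(h (l₁ := l₁) (l₂ := l₂) (by simp)).1 ⟨rfl, rfl⟩,
      (h (l₁ := l₁) (l₂ := l₂) (by simp)).2 ⟨rfl, rfl⟩]

lemma IsMotzkinPrefix.hgt_nonneg {w : List Step} (hw : IsMotzkinPrefix w) : 0 ≤ hgt w :=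
  hw w (List.prefix_refl w)

lemma IsMotzkinPrefix.count_D_le {w : List Step} (hw : IsMotzkinPrefix w) :
    w.count D ≤ w.count U := by
  have := hw.hgt_nonneg
  rw [hgt_eq_count_sub_count] at this
  omega

lemma isMotzkinPrefix_nil : IsMotzkinPrefix [] := fun p hp => by simp [List.prefix_nil.mp hp]

lemma isMotzkinPrefix_append {u v : List Step} :
    IsMotzkinPrefix (u ++ v) ↔ IsMotzkinPrefix u ∧ ∀ q, q <+: v → 0 ≤ hgt u + hgt q := by
  constructor
  · intro h
    refine ⟨fun p hp => h p (hp.trans (u.prefix_append v)), fun q hq => ?_⟩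
    simpa using h (u ++ q) ((List.prefix_append_right_inj u).mpr hq)
  · rintro ⟨hu, hv⟩ p hp
    rcases List.prefix_or_prefix_of_prefix hp (u.prefix_append v) with h | ⟨q, rfl⟩
    · exact hu p h
    · simpa using hv q ((List.prefix_append_right_inj u).mp hp)

lemma isMotzkinPrefix_concat {u : List Step} {s : Step} :
    IsMotzkinPrefix (u ++ [s]) ↔ IsMotzkinPrefix u ∧ 0 ≤ hgt u + s.val := by
  rw [isMotzkinPrefix_append]
  refine and_congr_right fun hu => ⟨fun h => by simpa using h [s] (List.prefix_refl _), ?_⟩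
  intro hs q hq
  rcases List.prefix_cons_iff.mp hq with rfl | ⟨t, rfl, ht⟩
  · simpa using hu.hgt_nonneg
  · simpa [List.prefix_nil.mp ht] using hs

lemma IsMotzkinPrefix.append {u v : List Step} (hu : IsMotzkinPrefix u) (hv : IsMotzkinPrefix v) :
    IsMotzkinPrefix (u ++ v) :=
  isMotzkinPrefix_append.mpr ⟨hu, fun q hq => add_nonneg hu.hgt_nonneg (hv q hq)⟩

lemma IsMotzkinPrefix.head?_ne_D {m : List Step} (hm : IsMotzkinPrefix m) : m.head? ≠ some D := by
  intro h
  obtain ⟨t, rfl⟩ : ∃ t, m = D :: t := by cases m <;> simp_all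
  simpa [Step.val] using hm [D] (by simp)

lemma IsMotzkinPrefix.getLast?_ne_U {m : List Step} (hm : IsMotzkinPrefix m) (hm0 : hgt m = 0) :
    m.getLast? ≠ some U := by
  intro h
  obtain ⟨t, rfl⟩ := List.getLast?_eq_some_iff.mp h
  have := (isMotzkinPrefix_concat.mp hm).1.hgt_nonneg
  simp [Step.val] at hm0
  omega

lemma isMotzkinPrefix_arch {m : List Step} (hm : IsMotzkinPrefix m) (hm0 : hgt m = 0) :
    IsMotzkinPrefix (U :: m ++ [D]) := by
  refine isMotzkinPrefix_concat.mpr ⟨isMotzkinPrefix_append (u := [U]).mpr ⟨?_, fun q hq => ?_⟩,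
    by simp [hm0, Step.val]⟩
  · exact isMotzkinPrefix_concat (u := []).mpr ⟨isMotzkinPrefix_nil, by simp [Step.val]⟩
  · have := hm q hq
    simp [Step.val]
    omega

lemma cornerless_append_arch {u m : List Step} (hm : IsMotzkinPrefix m) (hm0 : hgt m = 0) :
    Cornerless (u ++ (U :: m ++ [D])) ↔
      (Cornerless u ∧ u.getLast? ≠ some D) ∧ Cornerless m ∧ m ≠ [] := by
  have hhead := hm.head?_ne_D
  have hlast := hm.getLast?_ne_U hm0
  rw [cornerless_iff_isChain, cornerless_iff_isChain, cornerless_iff_isChain, List.isChain_append,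
    List.isChain_append, List.isChain_cons]
  cases hl : m.getLast? <;> simp_all [NoCorner, List.getLast?_cons]
  grind

lemma exists_last_passage {c : ℤ} (hc : 0 ≤ c) {w : List Step} (hw : c < hgt w) :
    ∃ u v, w = u ++ U :: v ∧ hgt u = c ∧ IsMotzkinPrefix v := by
  induction w using List.reverseRecOn with
  | nil => simp at hw; omega
  | append_singleton w s ih =>
    by_cases hlt : c < hgt w
    · obtain ⟨u, v, rfl, hu, hv⟩ := ih hlt
      refine ⟨u, v ++ [s], by simp, hu, isMotzkinPrefix_concat.mpr ⟨hv, ?_⟩⟩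
      have : hgt (u ++ U :: v ++ [s]) = hgt u + 1 + (hgt v + s.val) := by
        simp [Step.val]; ring
      omega
    · have hs : s = U := by
        cases s <;> simp [Step.val] at hw ⊢ <;> omega
      subst hs
      refine ⟨w, [], by simp, ?_, isMotzkinPrefix_nil⟩
      simp [Step.val] at hw
      exact le_antisymm (not_lt.mp hlt) hw

lemma hgt_lt_hgt_append_U {u q v : List Step} (hv : IsMotzkinPrefix (q ++ v)) :
    hgt u < hgt (u ++ U :: q) := by
  have := (isMotzkinPrefix_append.mp hv).1.hgt_nonneg
  simp [Step.val]
  omega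

lemma eq_of_append_U_eq_append_U {u v u' v' : List Step} (h : u ++ U :: v = u' ++ U :: v')
    (hu : hgt u = hgt u') (hv : IsMotzkinPrefix v) (hv' : IsMotzkinPrefix v') :
    u = u' ∧ v = v' := by
  rcases List.append_eq_append_iff.mp h with ⟨_ | ⟨b, q⟩, rfl, h'⟩ | ⟨_ | ⟨b, q⟩, rfl, h'⟩
  · simpa using h'
  · obtain ⟨rfl, rfl⟩ : U = b ∧ v = q ++ U :: v' := by simpa using h'
    exact absurd hu (hgt_lt_hgt_append_U hv).ne
  · simpa using h'.symm
  · obtain ⟨rfl, rfl⟩ : U = b ∧ v' = q ++ U :: v := by simpa using h'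
    exact absurd hu (hgt_lt_hgt_append_U hv').ne'

def cornerlessPrefixes (h : ℕ) : Set (List Step) :=
  {w | IsMotzkinPrefix w ∧ Cornerless w ∧ hgt w = h}

def endsWithD : Set (List Step) := {w | w.getLast? = some D}

def arches : Set (List Step) := (fun m => U :: m ++ [D]) '' (cornerlessPrefixes 0 \ {[]})

lemma Pgf_eq_genFun (h : ℕ) : Pgf h = genFun stepWeight (cornerlessPrefixes h) := by
  ext d
  refine congrArg Nat.cast (Nat.card_congr (Equiv.subtypeEquivRight fun w => ?_))
  change _ ↔ w ∈ cornerlessPrefixes h ∧ wordWeight stepWeight w = d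
  rw [wordWeight_stepWeight, Finsupp.ext_iff, Fin.forall_fin_two]
  simp [cornerlessPrefixes, and_assoc, eq_comm]

lemma hasFiniteFibers_cornerlessPrefixes (h : ℕ) :
    HasFiniteFibers stepWeight (cornerlessPrefixes h) :=
  hasFiniteFibers_of_count_D_le fun _ hw => hw.1.count_D_le

lemma cornerless_concat {u : List Step} {s : Step} :
    Cornerless (u ++ [s]) ↔ Cornerless u ∧ ∀ x ∈ u.getLast?, NoCorner x s := by
  simp [cornerless_iff_isChain, List.isChain_append]

lemma cornerlessPrefixes_succ_sdiff_endsWithD (h : ℕ) :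
    cornerlessPrefixes (h + 1) \ endsWithD =
      (· ++ [H]) '' cornerlessPrefixes (h + 1) ∪
        (· ++ [U]) '' (cornerlessPrefixes h \ endsWithD) := by
  ext w
  rcases w.eq_nil_or_concat' with rfl | ⟨u, s, rfl⟩
  · simp [cornerlessPrefixes, endsWithD]
    omega
  · cases s <;> simp [cornerlessPrefixes, endsWithD, isMotzkinPrefix_concat, cornerless_concat,
      Step.val, NoCorner] <;> grind [IsMotzkinPrefix.hgt_nonneg]

lemma cornerlessPrefixes_inter_endsWithD (h : ℕ) :
    cornerlessPrefixes h ∩ endsWithD =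
      Set.image2 (· ++ ·) (cornerlessPrefixes h \ endsWithD) arches := by
  ext w
  constructor
  · rintro ⟨⟨hw, hc, hh⟩, hD⟩
    obtain ⟨w, rfl⟩ := List.getLast?_eq_some_iff.mp hD
    obtain ⟨u, m, rfl, hu, hm⟩ := exists_last_passage (c := h) (w := w) (by positivity)
      (by simp [Step.val] at hh; omega)
    have hm0 : hgt m = 0 := by simp [hu, Step.val] at hh; omega
    rw [List.append_assoc] at hw hc
    have ⟨⟨hcu, hDu⟩, hcm, hne⟩ := (cornerless_append_arch hm hm0).mp hc
    exact ⟨u, ⟨⟨(isMotzkinPrefix_append.mp hw).1, hcu, hu⟩, hDu⟩, U :: m ++ [D],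
      ⟨m, ⟨⟨hm, hcm, by simpa using hm0⟩, hne⟩, rfl⟩, by simp⟩
  · rintro ⟨u, ⟨⟨hu, hc, hh⟩, hD⟩, _, ⟨m, ⟨⟨hm, hmc, hm0⟩, hne⟩, rfl⟩, rfl⟩
    replace hm0 : hgt m = 0 := by simpa using hm0
    exact ⟨⟨hu.append (isMotzkinPrefix_arch hm hm0),
      (cornerless_append_arch hm hm0).mpr ⟨⟨hc, hD⟩, hmc, hne⟩, by simp [hh, hm0, Step.val]⟩,
      List.getLast?_eq_some_iff.mpr ⟨u ++ U :: m, by simp⟩⟩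

lemma injOn_append_arches (h : ℕ) :
    ((cornerlessPrefixes h \ endsWithD) ×ˢ arches).InjOn fun p => p.1 ++ p.2 := by
  rintro ⟨u, _⟩ ⟨⟨⟨-, -, hu⟩, -⟩, m, ⟨⟨hm, -⟩, -⟩, rfl⟩
    ⟨u', _⟩ ⟨⟨⟨-, -, hu'⟩, -⟩, m', ⟨⟨hm', -⟩, -⟩, rfl⟩ heq
  replace heq : u ++ U :: m = u' ++ U :: m' := List.append_cancel_right (by simpa using heq)
  obtain ⟨rfl, rfl⟩ := eq_of_append_U_eq_append_U heq (hu.trans hu'.symm) hm hm'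
  rfl

lemma monomial_stepWeight_H : monomial (stepWeight H) (1 : ℚ) = X 0 := (X_def 0).symm

lemma monomial_stepWeight_U : monomial (stepWeight U) (1 : ℚ) = X 1 := (X_def 1).symm

lemma monomial_stepWeight_D : monomial (stepWeight D) (1 : ℚ) = 1 := monomial_zero_one

lemma genFun_cornerlessPrefixes_zero_sdiff_nil :
    genFun stepWeight (cornerlessPrefixes 0 \ {[]}) = Pgf 0 - 1 := by
  have hnil : {[]} ⊆ cornerlessPrefixes 0 := by
    simpa [cornerlessPrefixes] using ⟨isMotzkinPrefix_nil, cornerless_iff_isChain.mpr .nil⟩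
  rw [Pgf_eq_genFun, ← Set.union_sdiff_cancel hnil, genFun_union Set.disjoint_sdiff_right
    (hasFiniteFibers_singleton _) ((hasFiniteFibers_cornerlessPrefixes 0).mono Set.sdiff_subset),
    genFun_singleton, wordWeight_nil, monomial_zero_one, Set.union_sdiff_cancel hnil]
  ring

lemma genFun_arches : genFun stepWeight arches = X 1 * (Pgf 0 - 1) := by
  have hM := (hasFiniteFibers_cornerlessPrefixes 0).mono (Set.sdiff_subset (t := {[]}))
  have hUM : HasFiniteFibers stepWeight ((U :: ·) '' (cornerlessPrefixes 0 \ {[]})) := by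
    refine hasFiniteFibers_of_count_D_le ?_
    rintro _ ⟨m, ⟨⟨hm, -⟩, -⟩, rfl⟩
    simpa using hm.count_D_le.trans (Nat.le_succ _)
  rw [arches, ← Set.image_image (· ++ [D]) (U :: ·), genFun_image_concat D hUM,
    genFun_image_cons U hM, monomial_stepWeight_U, monomial_stepWeight_D,
    genFun_cornerlessPrefixes_zero_sdiff_nil, mul_one]

lemma Pgf_eq_genFun_sdiff_endsWithD_mul (h : ℕ) :
    Pgf h = genFun stepWeight (cornerlessPrefixes h \ endsWithD) * (1 + X 1 * (Pgf 0 - 1)) := by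
  have hA := (hasFiniteFibers_cornerlessPrefixes h).mono (Set.sdiff_subset (t := endsWithD))
  have harches : HasFiniteFibers stepWeight arches := by
    refine hasFiniteFibers_of_count_D_le ?_
    rintro _ ⟨m, ⟨⟨hm, -, hm0⟩, -⟩, rfl⟩
    exact (isMotzkinPrefix_arch hm (by simpa using hm0)).count_D_le
  rw [Pgf_eq_genFun]
  conv_lhs => rw [← Set.sdiff_union_inter (cornerlessPrefixes h) endsWithD]
  rw [genFun_union Set.disjoint_sdiff_inter hA
      ((hasFiniteFibers_cornerlessPrefixes h).mono Set.inter_subset_left),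
    cornerlessPrefixes_inter_endsWithD, genFun_image2_append hA harches (injOn_append_arches h),
    genFun_arches]
  ring

lemma genFun_succ_sdiff_endsWithD (h : ℕ) :
    genFun stepWeight (cornerlessPrefixes (h + 1) \ endsWithD) =
      Pgf (h + 1) * X 0 + genFun stepWeight (cornerlessPrefixes h \ endsWithD) * X 1 := by
  have hfin := (hasFiniteFibers_cornerlessPrefixes (h + 1)).mono
    (Set.sdiff_subset (t := endsWithD))
  have hdisj : Disjoint ((· ++ [H]) '' cornerlessPrefixes (h + 1))
      ((· ++ [U]) '' (cornerlessPrefixes h \ endsWithD)) := by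
    refine Set.disjoint_left.mpr ?_
    rintro _ ⟨u, -, rfl⟩ ⟨v, -, h⟩
    simpa using congrArg List.getLast? h
  rw [cornerlessPrefixes_succ_sdiff_endsWithD] at hfin ⊢
  rw [genFun_union hdisj (hfin.mono Set.subset_union_left) (hfin.mono Set.subset_union_right),
    genFun_image_concat H (hasFiniteFibers_cornerlessPrefixes _), genFun_image_concat U
      ((hasFiniteFibers_cornerlessPrefixes h).mono Set.sdiff_subset),
    monomial_stepWeight_H, monomial_stepWeight_U, Pgf_eq_genFun]

lemma Pgf_succ_mul (h : ℕ) :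
    Pgf (h + 1) * (1 - X 0 - X 0 * X 1 * (Pgf 0 - 1)) = X 1 * Pgf h := by
  linear_combination Pgf_eq_genFun_sdiff_endsWithD_mul (h + 1)
    + (1 + X 1 * (Pgf 0 - 1)) * genFun_succ_sdiff_endsWithD h
    - X 1 * Pgf_eq_genFun_sdiff_endsWithD_mul h

/-- with `P_h` the generating function of cornerless Motzkin path
prefixes ending at height `h` and `M = P_0`, for `h ≥ 1` we have
`P_h (1 − x − xy(M−1)) = y P_{h−1}`, and consequently
`P_h = y^h M / (1 − x − xy(M−1))^h`. -/
theorem prefix_generating_functions :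
    (∀ h : ℕ, 1 ≤ h →
      Pgf h * (1 - MvPowerSeries.X (0 : Fin 2)
          - MvPowerSeries.X (0 : Fin 2) * MvPowerSeries.X (1 : Fin 2) * (Pgf 0 - 1))
        = MvPowerSeries.X (1 : Fin 2) * Pgf (h - 1)) ∧
    (∀ h : ℕ,
      Pgf h = MvPowerSeries.X (1 : Fin 2) ^ h * Pgf 0 *
        (MvPowerSeries.invOfUnit
          (1 - MvPowerSeries.X (0 : Fin 2)
            - MvPowerSeries.X (0 : Fin 2) * MvPowerSeries.X (1 : Fin 2)
              * (Pgf 0 - 1)) 1) ^ h) := by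
  have hunit : constantCoeff (1 - X 0 - X 0 * X 1 * (Pgf 0 - 1) : MvPowerSeries (Fin 2) ℚ) =
      ((1 : ℚˣ) : ℚ) := by
    simp
  refine ⟨fun h hh => ?_,
    eq_pow_mul_mul_pow_of_succ_mul_eq (mul_invOfUnit _ 1 hunit) Pgf_succ_mul⟩
  obtain ⟨k, rfl⟩ := Nat.exists_eq_add_of_le' hh
  exact Pgf_succ_mul k
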